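/- arXiv:1905.04048 — 2 statements merged into one kernel-verified Lean document; each statement's English description precedes it below -/
import Mathlib

section
/- Every left Λ-module M whose dimension over k is at most 3 is annihilated by (rad Λ)² ; equivalently, yx·m = 0 and zx·m = 0 for all m ∈ M, so M has Loewy length at most 2. -/
open CategoryTheory Limits Opposite

/-- The algebra `Λ = Λ(q)` of Ringel–Zhang: a `k`-algebra with distinguished elements
`x, y, z` satisfying the defining relations
`x² = y² = z² = 0`, `yz = 0`, `xy + q·yx = 0`, `xz = zx`, `zy = zx`,
and admitting the `k`-basis `{1, x, y, z, yx, zx}`.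
Any such algebra is canonically isomorphic to the quotient of the free algebra
`k⟨x,y,z⟩` by the two-sided ideal generated by these relations. -/
structure LambdaAlg (k : Type) [Field k] (q : k) (Λ : Type) [Ring Λ] [Algebra k Λ] :
    Type where
  x : Λ
  y : Λ
  z : Λ
  hxx : x * x = 0
  hyy : y * y = 0
  hzz : z * z = 0
  hyz : y * z = 0
  hxy : x * y + q • (y * x) = 0
  hxz : x * z - z * x = 0
  hzy : z * y - z * x = 0
  basis : Module.Basis (Fin 6) k Λ
  hb0 : basis 0 = 1
  hb1 : basis 1 = x
  hb2 : basis 2 = y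
  hb3 : basis 3 = z
  hb4 : basis 4 = y * x
  hb5 : basis 5 = z * x

namespace LambdaAlg

variable {k : Type} [Field k] {q : k} {Λ : Type} [Ring Λ] [Algebra k Λ]

/-- The element `ax + by + cz` of `Λ`. -/
def w (D : LambdaAlg k q Λ) (a b c : k) : Λ := a • D.x + b • D.y + c • D.z

/-- The left ideal `U(a,b,c) = Λ(ax+by+cz) + Λ·yx + Λ·zx` of `Λ`. -/
def U (D : LambdaAlg k q Λ) (a b c : k) : Submodule Λ Λ :=
  Submodule.span Λ {D.w a b c, D.y * D.x, D.z * D.x}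

/-- The left `Λ`-module `M(a,b,c) = Λ/U(a,b,c)`. -/
abbrev M (D : LambdaAlg k q Λ) (a b c : k) : Type := Λ ⧸ D.U a b c

/-- The right ideal `U′(a,b,c) = (ax+by+cz)Λ + yx·Λ + zx·Λ` of `Λ`,
viewed as a `Λᵐᵒᵖ`-submodule of `Λ`. -/
def U' (D : LambdaAlg k q Λ) (a b c : k) : Submodule Λᵐᵒᵖ Λ :=
  Submodule.span Λᵐᵒᵖ {D.w a b c, D.y * D.x, D.z * D.x}

/-- The right `Λ`-module `M′(a,b,c) = Λ/U′(a,b,c)` (a module over `Λᵐᵒᵖ`). -/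
abbrev M' (D : LambdaAlg k q Λ) (a b c : k) : Type := Λ ⧸ D.U' a b c

/-- The `k`-subspace `{m ∈ M : x·m = y·m = z·m = 0}` of a left `Λ`-module `M`;
since `x, y, z` generate `rad Λ` and every simple `Λ`-module is isomorphic to `k`,
this is the socle of `M`. -/
def ann (D : LambdaAlg k q Λ) (M : Type) [AddCommGroup M] [Module k M] [Module Λ M]
    [IsScalarTower k Λ M] : Submodule k M where
  carrier := {m | D.x • m = 0 ∧ D.y • m = 0 ∧ D.z • m = 0}
  add_mem' := by
    rintro a b ⟨h1, h2, h3⟩ ⟨g1, g2, g3⟩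
    simp [smul_add, h1, h2, h3, g1, g2, g3]
  zero_mem' := by simp
  smul_mem' := by
    rintro a m ⟨h1, h2, h3⟩
    refine ⟨?_, ?_, ?_⟩ <;> rw [smul_comm] <;> simp [h1, h2, h3]

/-- The submodule `(rad Λ)·M = x·M + y·M + z·M` of a left `Λ`-module `M`. -/
def radM (D : LambdaAlg k q Λ) (M : Type) [AddCommGroup M] [Module Λ M] :
    Submodule Λ M :=
  Submodule.span Λ
    (Set.range (fun m : M => D.x • m) ∪ Set.range (fun m : M => D.y • m) ∪
      Set.range (fun m : M => D.z • m))

end LambdaAlg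

/-- A module is indecomposable if it is nonzero and is not the direct sum of two
nonzero submodules. -/
def IsIndecomposable (R : Type) [Ring R] (M : Type) [AddCommGroup M] [Module R M] :
    Prop :=
  Nontrivial M ∧
    ∀ N₁ N₂ : Submodule R M, N₁ ⊓ N₂ = ⊥ → N₁ ⊔ N₂ = ⊤ → N₁ = ⊥ ∨ N₂ = ⊥

/-- A module is torsionless if it admits an injective linear map into a finite free
module. -/
def IsTorsionless (R : Type) [Ring R] (M : Type) [AddCommGroup M] [Module R M] : Prop :=
  ∃ (n : ℕ) (f : M →ₗ[R] (Fin n → R)), Function.Injective f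

/-- The canonical evaluation map `M → M** = Hom_{Λᵒᵖ}(Hom_Λ(M, Λ), Λ)`,
sending `m` to `f ↦ f m`. -/
def evalMap (Λ : Type) [Ring Λ] (M : Type) [AddCommGroup M] [Module Λ M] :
    M → ((M →ₗ[Λ] Λ) →ₗ[Λᵐᵒᵖ] Λ) := fun m =>
  { toFun := fun f => f m
    map_add' := fun _ _ => rfl
    map_smul' := fun _ _ => rfl }

/-- The transformation `ω′(a,b,c) = (a, q⁻¹b, −((a+q⁻¹b)/a)·c)` on triples. -/
def omegaPrime {k : Type} [Field k] (q : k) (t : k × k × k) : k × k × k :=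
  (t.1, q⁻¹ * t.2.1, -((t.1 + q⁻¹ * t.2.1) / t.1) * t.2.2)

/-! If `A² = B² = 0` and `AB = c·BA` with `c ≠ 0`, then `m, Am, Bm, BAm` are linearly
independent as soon as `BAm ≠ 0`: applying `BA`, `B` and `A` to a vanishing combination
kills, in turn, the coefficients of `m`, `Am` and `Bm`, since each of these operators sends
all but one of the vectors still present to `0`, and that one to a nonzero multiple of `BAm`.
So in dimension at most 3 the product `BA` acts by zero, and `yx`, `zx` are such products. -/

section SquareZeroPair

variable {k : Type} [Field k] {Λ : Type} [Ring Λ] [Algebra k Λ]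
  {M : Type} [AddCommGroup M] [Module k M] [Module Λ M] [IsScalarTower k Λ M]
  {A B : Λ} {c : k}

theorem linearIndependent_smul_of_mul_smul_ne_zero (hc : c ≠ 0) (hA : A * A = 0)
    (hB : B * B = 0) (hAB : A * B = c • (B * A)) {m : M} (hm : (B * A) • m ≠ 0) :
    LinearIndependent k ![m, A • m, B • m, (B * A) • m] := by
  have hBAA : B * A * A = 0 := by rw [mul_assoc, hA, mul_zero]
  have hBAB : B * A * B = 0 := by rw [mul_assoc, hAB, mul_smul_comm, ← mul_assoc, hB,
    zero_mul, smul_zero]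
  have hBABA : B * A * (B * A) = 0 := by rw [← mul_assoc, hBAB, zero_mul]
  have hBBA : B * (B * A) = 0 := by rw [← mul_assoc, hB, zero_mul]
  have hABA : A * (B * A) = 0 := by rw [← mul_assoc, hAB, smul_mul_assoc, mul_assoc, hA,
    mul_zero, smul_zero]
  rw [Fintype.linearIndependent_iff]
  intro g hg
  simp only [Fin.sum_univ_four, Matrix.cons_val_zero, Matrix.cons_val_one,
    Matrix.cons_val_two, Matrix.cons_val_three, Matrix.head_cons, Matrix.tail_cons] at hg
  have act : ∀ a : Λ, g 0 • a • m + g 1 • (a * A) • m + g 2 • (a * B) • m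
      + g 3 • (a * (B * A)) • m = 0 := fun a => by
    simpa only [smul_add, smul_comm a, mul_smul, smul_zero] using congrArg (a • ·) hg
  have h0 : g 0 = 0 := by
    simpa only [hBAA, hBAB, hBABA, zero_smul, smul_zero, add_zero, smul_eq_zero,
      hm, or_false] using act (B * A)
  have h1 : g 1 = 0 := by
    simpa only [h0, hB, hBBA, zero_smul, smul_zero, zero_add, add_zero, smul_eq_zero,
      hm, or_false] using act B
  have h2 : g 2 = 0 := by
    simpa only [h0, h1, hA, hAB, hABA, zero_smul, smul_zero, zero_add, add_zero, smul_assoc,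
      smul_eq_zero, hc, hm, or_false, false_or] using act A
  have h3 : g 3 = 0 := by
    simpa only [h0, h1, h2, zero_smul, zero_add, smul_eq_zero, hm, or_false] using hg
  intro i
  fin_cases i <;> assumption

theorem mul_smul_eq_zero_of_rank_le_three (hrank : Module.rank k M ≤ 3) (hc : c ≠ 0)
    (hA : A * A = 0) (hB : B * B = 0) (hAB : A * B = c • (B * A)) (m : M) :
    (B * A) • m = 0 := by
  by_contra hm
  have h4 := (linearIndependent_smul_of_mul_smul_ne_zero hc hA hB hAB hm).cardinal_le_rank
  rw [Cardinal.mk_fin] at h4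
  exact absurd (h4.trans hrank) (by norm_num)

end SquareZeroPair

/-- Every left `Λ`-module of `k`-dimension at most 3 is annihilated by `(rad Λ)²`,
i.e. `yx·m = 0` and `zx·m = 0` for all `m ∈ M`. -/
theorem statement0 (k : Type) [Field k] (q : k) (hq : q ≠ 0)
    (Λ : Type) [Ring Λ] [Algebra k Λ] (D : LambdaAlg k q Λ)
    (M : Type) [AddCommGroup M] [Module k M] [Module Λ M] [IsScalarTower k Λ M]
    (hdim : Module.rank k M ≤ 3) (m : M) :
    (D.y * D.x) • m = 0 ∧ (D.z * D.x) • m = 0 := by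
  have hxy : D.x * D.y = (-q) • (D.y * D.x) := by
    rw [neg_smul, eq_neg_iff_add_eq_zero, D.hxy]
  have hxz : D.x * D.z = (1 : k) • (D.z * D.x) := by
    rw [one_smul, ← sub_eq_zero, D.hxz]
  exact ⟨mul_smul_eq_zero_of_rank_le_three hdim (neg_ne_zero.mpr hq) D.hxx D.hyy hxy m,
    mul_smul_eq_zero_of_rank_le_three hdim one_ne_zero D.hxx D.hzz hxz m⟩
end

section
/- For (a,b,c) ∈ k³ \ {(0,0,0)}, the left ideal Λ(ax+by+cz) of Λ is 2-dimensional over k if and only if a + b = 0 and ac = 0. Moreover, the left ideal Λ(x−y) has k-basis {x−y, yx} and the left ideal Λz has k-basis {z, zx}. -/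
open CategoryTheory Limits Opposite

/-!
Write `w = ax + by + cz`. Since `Λ` is spanned by `1, x, y, z, yx, zx` and the last two kill
`rad Λ`, the left ideal `Λw` is spanned by `w, xw = -qb·yx + c·zx, yw = a·yx, zw = (a+b)·zx`.
Unless `a + b = 0` and `ac = 0`, the last three span the whole socle `k·yx ⊕ k·zx`, so
`Λw ⊇ kw ⊕ k·yx ⊕ k·zx` has dimension at least 3. Otherwise `w` is a nonzero multiple of `x - y` or of `z`, and
`Λ(x - y) = k(x - y) ⊕ k·yx`, `Λz = kz ⊕ k·zx` are computed directly.
-/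

open Module Submodule

theorem Submodule.restrictScalars_span_singleton_eq_span_image_mul {k A : Type*}
    [CommSemiring k] [Semiring A] [Algebra k A] {s : Set A} (hs : span k s = ⊤) (v : A) :
    (span A {v}).restrictScalars k = span k ((· * v) '' s) := by
  ext u
  rw [show (· * v) '' s = LinearMap.mulRight k v '' s from rfl, ← map_span, hs, map_top,
    LinearMap.mem_range, restrictScalars_mem, mem_span_singleton]
  rfl

theorem LinearIndependent.finrank_span_pair {K V : Type*} [DivisionRing K] [AddCommGroup V]
    [Module K V] {v₁ v₂ : V} (h : LinearIndependent K ![v₁, v₂]) :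
    finrank K (span K {v₁, v₂}) = 2 := by
  have := finrank_span_eq_card h
  rwa [Matrix.range_cons_cons_empty, Fintype.card_fin] at this

namespace LambdaAlg

variable {k : Type} [Field k] {q : k} {Λ : Type} [Ring Λ] [Algebra k Λ] (D : LambdaAlg k q Λ)

theorem x_mul_y : D.x * D.y = -q • (D.y * D.x) := by
  rw [neg_smul]
  exact eq_neg_of_add_eq_zero_left D.hxy

theorem x_mul_z : D.x * D.z = D.z * D.x := sub_eq_zero.mp D.hxz

theorem z_mul_y : D.z * D.y = D.z * D.x := sub_eq_zero.mp D.hzy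

theorem y_mul_yx : D.y * (D.y * D.x) = 0 := by rw [← mul_assoc, D.hyy, zero_mul]

theorem y_mul_zx : D.y * (D.z * D.x) = 0 := by rw [← mul_assoc, D.hyz, zero_mul]

theorem z_mul_yx : D.z * (D.y * D.x) = 0 := by rw [← mul_assoc, z_mul_y, mul_assoc, D.hxx, mul_zero]

theorem z_mul_zx : D.z * (D.z * D.x) = 0 := by rw [← mul_assoc, D.hzz, zero_mul]

theorem x_mul_w (a b c : k) : D.x * D.w a b c = -(q * b) • (D.y * D.x) + c • (D.z * D.x) := by
  simp only [w, mul_add, mul_smul_comm, D.hxx, x_mul_y, x_mul_z, smul_zero, zero_add, smul_smul]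
  module

theorem y_mul_w (a b c : k) : D.y * D.w a b c = a • (D.y * D.x) := by
  simp only [w, mul_add, mul_smul_comm, D.hyy, D.hyz, smul_zero, add_zero]

theorem z_mul_w (a b c : k) : D.z * D.w a b c = (a + b) • (D.z * D.x) := by
  simp only [w, mul_add, mul_smul_comm, D.hzz, z_mul_y, smul_zero, add_zero]
  module

theorem span_one_x_y_z_yx_zx :
    span k {1, D.x, D.y, D.z, D.y * D.x, D.z * D.x} = (⊤ : Submodule k Λ) := by
  rw [← D.basis.span_eq]
  congr 1
  ext u
  simp [Set.range, Fin.exists_fin_succ, D.hb0, D.hb1, D.hb2, D.hb3, D.hb4, D.hb5, eq_comm]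

theorem eq_zero_of_linear_combination_eq_zero {α β γ δ ε : k}
    (h : α • D.x + β • D.y + γ • D.z + δ • (D.y * D.x) + ε • (D.z * D.x) = 0) :
    α = 0 ∧ β = 0 ∧ γ = 0 ∧ δ = 0 ∧ ε = 0 := by
  have := Fintype.linearIndependent_iff.mp D.basis.linearIndependent ![0, α, β, γ, δ, ε]
    (by simpa [Fin.sum_univ_six, D.hb0, D.hb1, D.hb2, D.hb3, D.hb4, D.hb5] using h)
  exact ⟨this 1, this 2, this 3, this 4, this 5⟩

theorem linearIndependent_x_sub_y_yx : LinearIndependent k ![D.x - D.y, D.y * D.x] := by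
  refine LinearIndependent.pair_iff.2 fun s t h => ?_
  obtain ⟨hs, -, -, ht, -⟩ := D.eq_zero_of_linear_combination_eq_zero (α := s) (β := -s) (γ := 0)
    (δ := t) (ε := 0) (by linear_combination (norm := module) h)
  exact ⟨hs, ht⟩

theorem linearIndependent_z_zx : LinearIndependent k ![D.z, D.z * D.x] := by
  refine LinearIndependent.pair_iff.2 fun s t h => ?_
  obtain ⟨-, -, hs, -, ht⟩ := D.eq_zero_of_linear_combination_eq_zero (α := 0) (β := 0) (γ := s)
    (δ := 0) (ε := t) (by linear_combination (norm := module) h)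
  exact ⟨hs, ht⟩

theorem linearIndependent_w_yx_zx {a b c : k} (habc : (a, b, c) ≠ (0, 0, 0)) :
    LinearIndependent k ![D.w a b c, D.y * D.x, D.z * D.x] := by
  refine Fintype.linearIndependent_iff.2 fun g hg => ?_
  simp only [Fin.sum_univ_three, Matrix.cons_val_zero, Matrix.cons_val_one, Matrix.cons_val_two,
    Matrix.head_cons, Matrix.tail_cons, w] at hg
  obtain ⟨ha, hb, hc, h1, h2⟩ := D.eq_zero_of_linear_combination_eq_zero (α := g 0 * a)
    (β := g 0 * b) (γ := g 0 * c) (δ := g 1) (ε := g 2) (by linear_combination (norm := module) hg)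
  have h0 : g 0 = 0 := by
    by_contra h0
    simp_all
  intro i
  fin_cases i <;> assumption

theorem restrictScalars_span_x_sub_y :
    (span Λ {D.x - D.y}).restrictScalars k = span k {D.x - D.y, D.y * D.x} := by
  refine le_antisymm ?_ (span_le.2 ?_)
  · rw [restrictScalars_span_singleton_eq_span_image_mul D.span_one_x_y_z_yx_zx, span_le]
    simp only [Set.image_insert_eq, Set.image_singleton, Set.insert_subset_iff,
      Set.singleton_subset_iff, SetLike.mem_coe, one_mul, mul_sub, mul_assoc, D.hxx, D.hyy,
      x_mul_y, z_mul_y, mul_smul_comm, y_mul_yx, z_mul_yx, mul_zero, mul_neg, zero_sub, neg_smul,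
      neg_neg, sub_zero, sub_self, smul_zero]
    exact ⟨subset_span (by simp), smul_mem _ _ (subset_span (by simp)), subset_span (by simp),
      zero_mem _, zero_mem _, zero_mem _⟩
  · rintro _ (rfl | rfl)
    · exact mem_span_singleton_self _
    · simpa [mul_sub, D.hyy] using smul_mem _ D.y (mem_span_singleton_self (D.x - D.y))

theorem restrictScalars_span_z :
    (span Λ {D.z}).restrictScalars k = span k {D.z, D.z * D.x} := by
  refine le_antisymm ?_ (span_le.2 ?_)
  · rw [restrictScalars_span_singleton_eq_span_image_mul D.span_one_x_y_z_yx_zx, span_le]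
    simp only [Set.image_insert_eq, Set.image_singleton, Set.insert_subset_iff,
      Set.singleton_subset_iff, SetLike.mem_coe, one_mul, mul_assoc, D.hyz, D.hzz, x_mul_z,
      y_mul_zx, z_mul_zx]
    exact ⟨subset_span (by simp), subset_span (by simp), zero_mem _, zero_mem _, zero_mem _,
      zero_mem _⟩
  · rintro _ (rfl | rfl)
    · exact mem_span_singleton_self _
    · simpa [x_mul_z] using smul_mem _ D.x (mem_span_singleton_self D.z)

theorem finrank_span_x_sub_y : finrank k (span Λ {D.x - D.y}) = 2 := by
  have := D.linearIndependent_x_sub_y_yx.finrank_span_pair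
  rwa [← restrictScalars_span_x_sub_y] at this

theorem finrank_span_z : finrank k (span Λ {D.z}) = 2 := by
  have := D.linearIndependent_z_zx.finrank_span_pair
  rwa [← restrictScalars_span_z] at this

theorem unit_smul_x_sub_y_or_z_eq_w {a b c : k} (habc : (a, b, c) ≠ (0, 0, 0))
    (h : a + b = 0 ∧ a * c = 0) :
    (∃ t : kˣ, t • (D.x - D.y) = D.w a b c) ∨ ∃ t : kˣ, t • D.z = D.w a b c := by
  obtain ⟨hab, hac⟩ := h
  rcases eq_or_ne a 0 with rfl | ha
  · obtain rfl : b = 0 := by simpa using hab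
    have hc : c ≠ 0 := by rintro rfl; exact habc rfl
    exact .inr ⟨.mk0 c hc, by simp [w]⟩
  · obtain rfl : c = 0 := (mul_eq_zero.1 hac).resolve_left ha
    obtain rfl : b = -a := eq_neg_of_add_eq_zero_right hab
    exact .inl ⟨.mk0 a ha, by simp only [Units.smul_mk0, w]; module⟩

theorem yx_mem_and_zx_mem_span_w (hq : q ≠ 0) {a b c : k} (h : ¬(a + b = 0 ∧ a * c = 0)) :
    D.y * D.x ∈ span Λ {D.w a b c} ∧ D.z * D.x ∈ span Λ {D.w a b c} := by
  let P := (span Λ {D.w a b c}).restrictScalars k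
  have mem (r : Λ) : r * D.w a b c ∈ P := smul_mem _ r (mem_span_singleton_self _)
  have hx : -(q * b) • (D.y * D.x) + c • (D.z * D.x) ∈ P := D.x_mul_w a b c ▸ mem D.x
  have hy : a • (D.y * D.x) ∈ P := D.y_mul_w a b c ▸ mem D.y
  have hz : (a + b) • (D.z * D.x) ∈ P := D.z_mul_w a b c ▸ mem D.z
  change D.y * D.x ∈ P ∧ D.z * D.x ∈ P
  rcases eq_or_ne a 0 with rfl | ha
  · have hb : b ≠ 0 := by rintro rfl; simp at h
    have hzx : D.z * D.x ∈ P := (P.smul_mem_iff (by simpa using hb)).1 hz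
    have hyx : -(q * b) • (D.y * D.x) ∈ P := by simpa using P.sub_mem hx (P.smul_mem c hzx)
    exact ⟨(P.smul_mem_iff (by simp [hq, hb])).1 hyx, hzx⟩
  · have hyx : D.y * D.x ∈ P := (P.smul_mem_iff ha).1 hy
    refine ⟨hyx, ?_⟩
    by_cases hab : a + b = 0
    · have hc : c ≠ 0 := fun hc => h ⟨hab, by simp [hc]⟩
      exact (P.smul_mem_iff hc).1 (by simpa using P.sub_mem hx (P.smul_mem (-(q * b)) hyx))
    · exact (P.smul_mem_iff hab).1 hz

theorem three_le_finrank_span_w (hq : q ≠ 0) {a b c : k} (habc : (a, b, c) ≠ (0, 0, 0))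
    (h : ¬(a + b = 0 ∧ a * c = 0)) : 3 ≤ finrank k (span Λ {D.w a b c}) := by
  have : Module.Finite k Λ := .of_basis D.basis
  obtain ⟨hyx, hzx⟩ := D.yx_mem_and_zx_mem_span_w hq h
  have hle : span k (Set.range ![D.w a b c, D.y * D.x, D.z * D.x]) ≤
      (span Λ {D.w a b c}).restrictScalars k := by
    rw [span_le, Set.range_subset_iff]
    intro i
    fin_cases i
    exacts [mem_span_singleton_self _, hyx, hzx]
  have := finrank_mono hle
  rwa [finrank_span_eq_card (D.linearIndependent_w_yx_zx habc), Fintype.card_fin] at this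

end LambdaAlg

/-- The left ideal `Λ(ax+by+cz)` is 2-dimensional over `k` iff `a + b = 0` and
`ac = 0`; moreover `Λ(x−y)` has `k`-basis `{x−y, yx}` and `Λz` has `k`-basis
`{z, zx}`. -/
theorem statement1 (k : Type) [Field k] (q : k) (hq : q ≠ 0)
    (Λ : Type) [Ring Λ] [Algebra k Λ] (D : LambdaAlg k q Λ) :
    (∀ a b c : k, (a, b, c) ≠ (0, 0, 0) →
      (Module.finrank k ↥(Submodule.span Λ {D.w a b c}) = 2 ↔ a + b = 0 ∧ a * c = 0))
    ∧ ((Submodule.span Λ {D.x - D.y}).restrictScalars k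
         = Submodule.span k {D.x - D.y, D.y * D.x}
       ∧ LinearIndependent k ![D.x - D.y, D.y * D.x])
    ∧ ((Submodule.span Λ {D.z}).restrictScalars k = Submodule.span k {D.z, D.z * D.x}
       ∧ LinearIndependent k ![D.z, D.z * D.x]) := by
  refine ⟨fun a b c habc => ⟨fun h2 => ?_, fun h => ?_⟩,
    ⟨D.restrictScalars_span_x_sub_y, D.linearIndependent_x_sub_y_yx⟩,
    ⟨D.restrictScalars_span_z, D.linearIndependent_z_zx⟩⟩
  · by_contra h
    have := D.three_le_finrank_span_w hq habc h
    omega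
  · rcases D.unit_smul_x_sub_y_or_z_eq_w habc h with ⟨t, ht⟩ | ⟨t, ht⟩ <;>
      rw [← ht, span_singleton_group_smul_eq]
    exacts [D.finrank_span_x_sub_y, D.finrank_span_z]
end
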